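/- arXiv:1610.00516 — 2 statements merged into one kernel-verified Lean document; each statement's English description precedes it below -/
import Mathlib

section
/- Let $H$ be an abelian group, $n \ge 1$, and $\omega_0,\dots,\omega_n : H \to \mathbb{R}$ group homomorphisms. Then a function $a : H \to K$ satisfies the Novikov finiteness condition for every convex combination $t_0\omega_0 + \cdots + t_n\omega_n$ (with $t_i \ge 0$, $\sum t_i = 1$) if and only if it satisfies the finiteness condition for each $\omega_i$, $i = 0,\dots,n$. -/
/-!
A convex combination of the values `ωᵢ A` is at least their minimum, so the sublevel set
`{ω ≤ C}` of a convex combination lies in the union of the sublevel sets `{ωᵢ ≤ C}`; conversely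
each `ωᵢ` is itself the convex combination with weights `Pi.single i 1`.
-/

open Finset

theorem exists_le_of_weighted_sum_le {ι 𝕜 : Type*} [Fintype ι] [Nonempty ι]
    [Semiring 𝕜] [LinearOrder 𝕜] [IsOrderedRing 𝕜] {t x : ι → 𝕜} {C : 𝕜}
    (ht : ∀ i, 0 ≤ t i) (ht1 : ∑ i, t i = 1) (hC : ∑ i, t i * x i ≤ C) : ∃ i, x i ≤ C := by
  obtain ⟨i, -, hi⟩ := exists_mem_eq_inf' univ_nonempty x
  refine ⟨i, ?_⟩
  calc x i = ∑ j, t j * x i := by rw [← sum_mul, ht1, one_mul]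
    _ ≤ ∑ j, t j * x j := by
      gcongr with j
      · exact ht j
      · exact hi ▸ inf'_le x (mem_univ j)
    _ ≤ C := hC

def NovikovFinite {H K : Type*} [Zero K] (a : H → K) (ω : H → ℝ) : Prop :=
  ∀ C : ℝ, {A : H | a A ≠ 0 ∧ ω A ≤ C}.Finite

theorem NovikovFinite.weighted_sum {H K ι : Type*} [Zero K] [Fintype ι] [Nonempty ι]
    {a : H → K} {ω : ι → H → ℝ} (hω : ∀ i, NovikovFinite a (ω i)) {t : ι → ℝ}
    (ht : ∀ i, 0 ≤ t i) (ht1 : ∑ i, t i = 1) : NovikovFinite a (fun A => ∑ i, t i * ω i A) := by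
  intro C
  refine (Set.finite_iUnion fun i => hω i C).subset fun A ⟨haA, hA⟩ => ?_
  obtain ⟨i, hi⟩ := exists_le_of_weighted_sum_le ht ht1 hA
  exact Set.mem_iUnion.2 ⟨i, haA, hi⟩

theorem stmt2_general (H K : Type*) [AddCommGroup H] [Field K] (n : ℕ)
    (ω : Fin (n+1) → (H →+ ℝ)) (a : H → K) :
    (∀ t : Fin (n+1) → ℝ, (∀ i, 0 ≤ t i) → (∑ i, t i) = 1 →
      ∀ C : ℝ, {A : H | a A ≠ 0 ∧ (∑ i, t i * ω i A) ≤ C}.Finite)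
    ↔ (∀ i, ∀ C : ℝ, {A : H | a A ≠ 0 ∧ ω i A ≤ C}.Finite) := by
  constructor
  · intro h i
    have hsingle : (0 : Fin (n+1) → ℝ) ≤ Pi.single i 1 := Pi.single_nonneg.2 zero_le_one
    simpa [Pi.single_apply] using h (Pi.single i 1) hsingle (by simp)
  · exact fun h t ht ht1 => NovikovFinite.weighted_sum (ω := fun i => ω i) h ht ht1

/-- the Novikov finiteness condition holds for every convex
combination `t₀ω₀ + ⋯ + tₙωₙ` iff it holds for each `ωᵢ`. -/
theorem stmt2 (H K : Type*) [AddCommGroup H] [Field K] (n : ℕ) (hn : 1 ≤ n)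
    (ω : Fin (n+1) → (H →+ ℝ)) (a : H → K) :
    (∀ t : Fin (n+1) → ℝ, (∀ i, 0 ≤ t i) → (∑ i, t i) = 1 →
      ∀ C : ℝ, {A : H | a A ≠ 0 ∧ (∑ i, t i * ω i A) ≤ C}.Finite)
    ↔ (∀ i, ∀ C : ℝ, {A : H | a A ≠ 0 ∧ ω i A ≤ C}.Finite) :=
  stmt2_general H K n ω a
end

section
/- Let $(t_n)$ be a sequence of positive reals converging to $0$, and let $(a_n), (c_n)$ be real sequences such that for all $m, n$: $a_m + \frac{t_n}{t_m}(c_m - a_m) \ge c_n$. Suppose moreover $a_n \to +\infty$. Then a contradiction arises; i.e., there exist no such sequences. Equivalently: if for all $m,n$ one has $(\frac{t_m}{t_n} - 1)(a_m - a_n) \ge 0$, and $a_n \to \infty$ with $t_n \to 0$, $t_n > 0$, and $(t_n)$ not eventually constant, then false. -/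
/-- there are no sequences `t_n > 0` with `t_n → 0`, and real
sequences `a_n, c_n` with `a_n → +∞` such that
`c_n ≤ a_m + (t_n/t_m)(c_m - a_m)` for all `m, n`. -/
theorem stmt15 (t a c : ℕ → ℝ)
    (ht : ∀ n, 0 < t n)
    (ht0 : Filter.Tendsto t Filter.atTop (nhds 0))
    (h : ∀ m n, c n ≤ a m + (t n / t m) * (c m - a m))
    (ha : Filter.Tendsto a Filter.atTop Filter.atTop) :
    False := by
  have h1 : ∀ᶠ n in Filter.atTop, t n < t 0 := ht0.eventually_lt_const (ht 0)
  have h2 : ∀ᶠ n in Filter.atTop, a 0 < a n := ha.eventually_gt_atTop (a 0)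
  obtain ⟨n, hn1, hn2⟩ := (h1.and h2).exists
  have e1 := h 0 n
  have e2 := h n 0
  have p0 := ht 0
  have pn := ht n
  have e1' : t 0 * c n ≤ t 0 * a 0 + t n * (c 0 - a 0) := by
    have := mul_le_mul_of_nonneg_left e1 p0.le
    field_simp at this
    linarith
  have e2' : t n * c 0 ≤ t n * a n + t 0 * (c n - a n) := by
    have := mul_le_mul_of_nonneg_left e2 pn.le
    field_simp at this
    linarith
  nlinarith [mul_pos (sub_pos.2 hn1) (sub_pos.2 hn2)]
end
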